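/- Consider an ABPG sequence with g ≡ 0 (see context) converging to a point x̃ with ∇f(x̃) = 0, and assume f satisfies the KL inequality at x̃ with exponent θ = 0: there exist c > 0, ε > 0, η > 0 such that c‖∇f(x)‖ ≥ 1 for all x with ‖x − x̃‖ < ε and f(x̃) < f(x) < f(x̃) + η. Then the sequence {x^k} converges to x̃ in a finite number of steps: there exists K such that x^k = x̃ for all k ≥ K. -/

import Mathlib

open scoped RealInnerProductSpace NNReal

/-- Hessian–vector product `∇²φ(x) d`. -/
noncomputable def hessApply {n : ℕ} (φ : EuclideanSpace ℝ (Fin n) → ℝ)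
    (x d : EuclideanSpace ℝ (Fin n)) : EuclideanSpace ℝ (Fin n) :=
  fderiv ℝ (gradient φ) x d

/-! Near `x̃` we have `c ‖∇f‖ < 1` and `f < f(x̃) + η`, so the KL inequality with exponent `0`
forces `f ≤ f(x̃)`: `x̃` is a local maximum of `f`. Strong convexity of `φ` turns the descent condition
into `f(x^{k+1}) + (α t_k σ / (2λ)) ‖d^k‖² ≤ f(x^k)`, so `f(x^k)` decreases to `f(x̃)`; being
eventually `≤ f(x̃)` it is eventually constant, which forces `d^k = 0`. Hence the sequence is
eventually constant, and equal to its limit. -/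

open Filter Topology Set

section Gradient

variable {E : Type*} [NormedAddCommGroup E] [InnerProductSpace ℝ E] [CompleteSpace E]

theorem ContDiff.gradient {f : E → ℝ} {m n : WithTop ℕ∞} (hf : ContDiff ℝ n f) (hmn : m + 1 ≤ n) :
    ContDiff ℝ m (gradient f) :=
  (InnerProductSpace.toDual ℝ E).symm.contDiff.comp (hf.fderiv_right hmn)

theorem mul_norm_sq_le_inner_fderiv_gradient {φ : E → ℝ} {σ : ℝ} (hφ : ContDiff ℝ 2 φ)
    (hφsc : ConvexOn ℝ univ (fun y => φ y - σ / 2 * ‖y‖ ^ 2)) (x d : E) :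
    σ * ‖d‖ ^ 2 ≤ ⟪fderiv ℝ (gradient φ) x d, d⟫ := by
  have hline : ∀ s : ℝ, HasDerivAt (fun s : ℝ => x + s • d) d s := fun s =>
    ((hasDerivAt_id s).smul_const d).const_add x |>.congr_deriv (one_smul ℝ d)
  have hψ' : ∀ s : ℝ, HasDerivAt (fun s : ℝ => φ (x + s • d) - σ / 2 * ‖x + s • d‖ ^ 2)
      (⟪gradient φ (x + s • d), d⟫ - σ * ⟪x + s • d, d⟫) s := by
    intro s
    have hφ' := ((hφ.differentiable (by norm_num)) (x + s • d)).hasGradientAt.hasFDerivAt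
    refine ((hφ'.comp_hasDerivAt s (hline s)).sub
      (((hline s).norm_sq).const_mul (σ / 2))).congr_deriv ?_
    simp only [InnerProductSpace.toDual_apply_apply]
    ring
  have hψconv : ConvexOn ℝ univ (fun s : ℝ => φ (x + s • d) - σ / 2 * ‖x + s • d‖ ^ 2) := by
    simpa [Function.comp_def, AffineMap.lineMap_apply, add_comm, add_sub_cancel_left]
      using hφsc.comp_affineMap (AffineMap.lineMap x (x + d))
  have hmono : Monotone (fun s : ℝ => ⟪gradient φ (x + s • d), d⟫ - σ * ⟪x + s • d, d⟫) := by
    intro a b hab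
    have := hψconv.monotoneOn_deriv (fun s _ => (hψ' s).differentiableAt)
      (mem_univ a) (mem_univ b) hab
    simpa only [(hψ' _).deriv] using this
  have hderiv : HasDerivAt (fun s : ℝ => ⟪gradient φ (x + s • d), d⟫ - σ * ⟪x + s • d, d⟫)
      (⟪fderiv ℝ (gradient φ) x d, d⟫ - σ * ‖d‖ ^ 2) 0 := by
    have hgrad : HasFDerivAt (gradient φ) (fderiv ℝ (gradient φ) x) (x + (0 : ℝ) • d) := by
      rw [zero_smul, add_zero]
      exact ((hφ.gradient (m := 1) (by norm_num)).differentiable one_ne_zero x).hasFDerivAt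
    refine (((hgrad.comp_hasDerivAt 0 (hline 0)).inner ℝ (hasDerivAt_const 0 d)).sub
      (((hline 0).inner ℝ (hasDerivAt_const 0 d)).const_mul σ)).congr_deriv ?_
    simp
  linarith [hderiv.nonneg_of_monotone hmono]

end Gradient

theorem isLocalMax_of_KL_exponent_zero {E F : Type*} [NormedAddCommGroup E] [NormedAddCommGroup F]
    {f : E → ℝ} {g : E → F} {a : E} {c ε η : ℝ} (hf : ContinuousAt f a) (hg : ContinuousAt g a)
    (hga : g a = 0) (hε : 0 < ε) (hη : 0 < η)
    (hKL : ∀ y, ‖y - a‖ < ε → f a < f y → f y < f a + η → 1 ≤ c * ‖g y‖) :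
    IsLocalMax f a := by
  have hcg : Tendsto (fun y => c * ‖g y‖) (𝓝 a) (𝓝 0) := by
    simpa [hga] using (hg.norm.const_mul c).tendsto
  filter_upwards [Metric.ball_mem_nhds a hε,
    hf.eventually (gt_mem_nhds (lt_add_of_pos_right _ hη)),
    hcg.eventually_lt_const zero_lt_one] with y hy hyη hcy
  by_contra! hay
  exact hcy.not_ge (hKL y (mem_ball_iff_norm.mp hy) hay hyη)

theorem eventually_eq_zero_of_sufficient_decrease {u r : ℕ → ℝ} {L : ℝ} (hr : ∀ k, 0 ≤ r k)
    (hdec : ∀ k, u (k + 1) + r k ≤ u k) (hu : Tendsto u atTop (𝓝 L))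
    (hle : ∀ᶠ k in atTop, u k ≤ L) : ∀ᶠ k in atTop, r k = 0 := by
  have hanti : Antitone u := antitone_nat_of_succ_le fun k => by linarith [hdec k, hr k]
  have heq : ∀ᶠ k in atTop, u k = L := hle.mono fun k hk => hk.antisymm (hanti.le_of_tendsto hu k)
  filter_upwards [heq, (tendsto_add_atTop_nat 1).eventually heq] with k hk hk1
  linarith [hdec k, hr k]

theorem eventually_eq_of_tendsto_of_eventually_succ_eq {X : Type*} [TopologicalSpace X]
    [T2Space X] {x : ℕ → X} {a : X} (hx : Tendsto x atTop (𝓝 a))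
    (hsucc : ∀ᶠ k in atTop, x (k + 1) = x k) : ∀ᶠ k in atTop, x k = a := by
  obtain ⟨K, hK⟩ := eventually_atTop.mp hsucc
  have hconst : ∀ k ≥ K, x k = x K := fun k hk => by
    induction k, hk using Nat.le_induction with
    | base => rfl
    | succ k hk ih => rw [hK k hk, ih]
  have hxK : x K = a := tendsto_nhds_unique (tendsto_const_nhds.congr'
    (eventually_atTop.mpr ⟨K, fun k hk => (hconst k hk).symm⟩)) hx
  exact eventually_atTop.mpr ⟨K, fun k hk => (hconst k hk).trans hxK⟩

theorem abpg_finite_convergence_KL_exponent_zero_general {n : ℕ}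
    (φ f : EuclideanSpace ℝ (Fin n) → ℝ) (σ : ℝ) (hσ : 0 < σ)
    (hφ : ContDiff ℝ 2 φ)
    (hφsc : ConvexOn ℝ Set.univ (fun y => φ y - σ / 2 * ‖y‖ ^ 2))
    (hf : ContDiff ℝ 1 f)
    (lam : ℝ) (hlam : 0 < lam) (α : ℝ) (hα : α ∈ Set.Ioo (0 : ℝ) 1)
    (tmin : ℝ) (htmin : tmin ∈ Set.Ioc (0 : ℝ) 1)
    (x d : ℕ → EuclideanSpace ℝ (Fin n)) (t : ℕ → ℝ)
    (ht : ∀ k, t k ∈ Set.Icc tmin 1)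
    (hupd : ∀ k, x (k + 1) = x k + t k • d k)
    (hdec : ∀ k, f (x (k + 1)) ≤
      f (x k) - α * t k / (2 * lam) * ⟪hessApply φ (x k) (d k), d k⟫)
    (xtilde : EuclideanSpace ℝ (Fin n))
    (hconv : Filter.Tendsto x Filter.atTop (nhds xtilde))
    (hstat : gradient f xtilde = 0)
    (c ε η : ℝ) (hε : 0 < ε) (hη : 0 < η)
    (hKL : ∀ y : EuclideanSpace ℝ (Fin n), ‖y - xtilde‖ < ε →
      f xtilde < f y → f y < f xtilde + η → 1 ≤ c * ‖gradient f y‖) :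
    ∃ K : ℕ, ∀ k, K ≤ k → x k = xtilde := by
  have hcurv : ∀ k, σ * ‖d k‖ ^ 2 ≤ ⟪hessApply φ (x k) (d k), d k⟫ := fun k =>
    mul_norm_sq_le_inner_fderiv_gradient hφ hφsc (x k) (d k)
  have hcoef : ∀ k, 0 < α * t k / (2 * lam) := fun k => by
    have := htmin.1.trans_le (ht k).1
    have := hα.1
    positivity
  have hsuff : ∀ k, f (x (k + 1)) + α * t k / (2 * lam) * (σ * ‖d k‖ ^ 2) ≤ f (x k) := fun k => by
    linarith [hdec k, mul_le_mul_of_nonneg_left (hcurv k) (hcoef k).le]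
  have hlocmax : IsLocalMax f xtilde :=
    isLocalMax_of_KL_exponent_zero hf.continuous.continuousAt
      (hf.gradient (m := 0) (by norm_num)).continuous.continuousAt hstat hε hη hKL
  have hstop : ∀ᶠ k in atTop, α * t k / (2 * lam) * (σ * ‖d k‖ ^ 2) = 0 :=
    eventually_eq_zero_of_sufficient_decrease (fun k => by have := hcoef k; positivity) hsuff
      ((hf.continuous.tendsto xtilde).comp hconv) (hconv.eventually hlocmax)
  refine eventually_atTop.mp (eventually_eq_of_tendsto_of_eventually_succ_eq hconv ?_)
  filter_upwards [hstop] with k hk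
  have hdk : d k = 0 := by simpa [(hcoef k).ne', hσ.ne'] using hk
  rw [hupd k, hdk, smul_zero, add_zero]

theorem abpg_finite_convergence_KL_exponent_zero {n : ℕ}
    (φ f : EuclideanSpace ℝ (Fin n) → ℝ) (σ : ℝ) (hσ : 0 < σ)
    (hφ : ContDiff ℝ 2 φ)
    (hφsc : ConvexOn ℝ Set.univ (fun y => φ y - σ / 2 * ‖y‖ ^ 2))
    (hf : ContDiff ℝ 1 f)
    (hbdd : BddBelow (Set.range f))
    (hlevel : ∀ r : ℝ, Bornology.IsBounded {y | f y ≤ r})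
    (hlip : ∀ s : Set (EuclideanSpace ℝ (Fin n)), Bornology.IsBounded s →
      ∃ K : ℝ≥0, LipschitzOnWith K (gradient f) s)
    (lam : ℝ) (hlam : 0 < lam) (α : ℝ) (hα : α ∈ Set.Ioo (0 : ℝ) 1)
    (tmin : ℝ) (htmin : tmin ∈ Set.Ioc (0 : ℝ) 1)
    (x d : ℕ → EuclideanSpace ℝ (Fin n)) (t : ℕ → ℝ)
    (ht : ∀ k, t k ∈ Set.Icc tmin 1)
    (hopt : ∀ k, gradient f (x k) + (1 / lam) • hessApply φ (x k) (d k) = 0)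
    (hupd : ∀ k, x (k + 1) = x k + t k • d k)
    (hdec : ∀ k, f (x (k + 1)) ≤
      f (x k) - α * t k / (2 * lam) * ⟪hessApply φ (x k) (d k), d k⟫)
    (xtilde : EuclideanSpace ℝ (Fin n))
    (hconv : Filter.Tendsto x Filter.atTop (nhds xtilde))
    (hstat : gradient f xtilde = 0)
    (c ε η : ℝ) (hc : 0 < c) (hε : 0 < ε) (hη : 0 < η)
    (hKL : ∀ y : EuclideanSpace ℝ (Fin n), ‖y - xtilde‖ < ε →
      f xtilde < f y → f y < f xtilde + η → 1 ≤ c * ‖gradient f y‖) :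
    ∃ K : ℕ, ∀ k, K ≤ k → x k = xtilde :=
  abpg_finite_convergence_KL_exponent_zero_general φ f σ hσ hφ hφsc hf lam hlam α hα tmin htmin x d
    t ht hupd hdec xtilde hconv hstat c ε η hε hη hKL
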